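/- arXiv:math/0506407 — 6 statements merged into one kernel-verified Lean document; each statement's English description precedes it below -/
import Mathlib

section
/- Let K be a field of characteristic 0 and let j, z ∈ K with j ≠ 0. Set s = (j²+9)/(2j), v = ((j-3)/(4j²))·z, w = ((j+3)/(4j²))·z. If z² = (j²+9)(j+9)(j+1)(j²+4j+9), then v² = s(s+5)(s+2)(s-3) and w² = s(s+5)(s+2)(s+3). -/
theorem genus_two_birational_map {K : Type*} [Field K] [CharZero K]
    (j z : K) (hj : j ≠ 0)
    (s v w : K)
    (hs : s = (j ^ 2 + 9) / (2 * j))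
    (hv : v = ((j - 3) / (4 * j ^ 2)) * z)
    (hw : w = ((j + 3) / (4 * j ^ 2)) * z)
    (hz : z ^ 2 = (j ^ 2 + 9) * (j + 9) * (j + 1) * (j ^ 2 + 4 * j + 9)) :
    v ^ 2 = s * (s + 5) * (s + 2) * (s - 3) ∧
    w ^ 2 = s * (s + 5) * (s + 2) * (s + 3) := by
  subst hs hv hw
  constructor <;> (rw [mul_pow, hz]; field_simp; ring)
end

section
/- Let K be a field of characteristic 0 and let j, z ∈ K with 2j ≠ 7. Set s = (j²-1)/(2j-7) and v = z/(2j-7)². If z² = (j²-4j+13)(2j²-2j+5)(2j⁴+2j³-3j²-58j+107), then v² = (s-2)(2s-1)(2s²+s+2). -/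
theorem genus_three_hyperelliptic_map {K : Type*} [Field K] [CharZero K]
    (j z : K) (hj : 2 * j ≠ 7)
    (s v : K)
    (hs : s = (j ^ 2 - 1) / (2 * j - 7))
    (hv : v = z / (2 * j - 7) ^ 2)
    (hz : z ^ 2 = (j ^ 2 - 4 * j + 13) * (2 * j ^ 2 - 2 * j + 5) *
      (2 * j ^ 4 + 2 * j ^ 3 - 3 * j ^ 2 - 58 * j + 107)) :
    v ^ 2 = (s - 2) * (2 * s - 1) * (2 * s ^ 2 + s + 2) := by
  have hd : 2 * j - 7 ≠ 0 := sub_ne_zero.mpr hj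
  subst hs hv
  field_simp
  ring_nf
  ring_nf at hz
  linear_combination hz
end

section
/- Let K be a field of characteristic 0 and j ∈ K with 2j ≠ 7. Set s = (j²-1)/(2j-7) and u = w/(2j-7)². If w² = (j-1)(2j-7)(j+1)(2j²+j+17)(4j²-13j+19), then u² = s(8s²-11s+8). -/
theorem elliptic_pullback_72 {K : Type*} [Field K] [CharZero K]
    (j w : K) (hj : 2 * j ≠ 7)
    (s u : K)
    (hs : s = (j ^ 2 - 1) / (2 * j - 7))
    (hu : u = w / (2 * j - 7) ^ 2)
    (hw : w ^ 2 = (j - 1) * (2 * j - 7) * (j + 1) * (2 * j ^ 2 + j + 17) *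
      (4 * j ^ 2 - 13 * j + 19)) :
    u ^ 2 = s * (8 * s ^ 2 - 11 * s + 8) := by
  have hd : 2 * j - 7 ≠ 0 := sub_ne_zero.mpr hj
  subst hs hu
  field_simp
  ring_nf
  ring_nf at hw
  linear_combination hw
end

section
/- Let K be a field of characteristic ≠ 2, let u₂, A_y, A_t ∈ K, and let u, v, w ∈ K with u² = u₂, v² = A_y² - u₂, w² = A_t² - u₂. Suppose B_y = A_y + v and B_t = A_t + w are nonzero and B_y ≠ u, B_t ≠ u, B_t ≠ -u. Then setting η = (B_y + u)/(B_y - u) and τ = (B_t + u)/(B_t - u), we have η² = (A_y + u)/(A_y - u), τ² = (A_t + u)/(A_t - u), and moreover ((τ-1)(η+1))/((τ+1)(η-1)) = B_y/B_t and ((τ-1)/(τ+1))² = u₂/B_t², provided A_y ≠ u, A_t ≠ u and the denominators are nonzero. -/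
theorem quadratic_transformation_core {K : Type*} [Field K] (h2 : (2 : K) ≠ 0)
    (u₂ Ay At u v w : K)
    (hu : u ^ 2 = u₂) (hv : v ^ 2 = Ay ^ 2 - u₂) (hw : w ^ 2 = At ^ 2 - u₂)
    (By Bt : K) (hBy : By = Ay + v) (hBt : Bt = At + w)
    (hBy0 : By ≠ 0) (hBt0 : Bt ≠ 0)
    (hByu : By ≠ u) (hBtu : Bt ≠ u) (hBtu' : Bt ≠ -u)
    (hAyu : Ay ≠ u) (hAtu : At ≠ u)
    (η τ : K) (hη : η = (By + u) / (By - u)) (hτ : τ = (Bt + u) / (Bt - u))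
    (hden : (τ + 1) * (η - 1) ≠ 0) :
    η ^ 2 = (Ay + u) / (Ay - u) ∧
    τ ^ 2 = (At + u) / (At - u) ∧
    ((τ - 1) * (η + 1)) / ((τ + 1) * (η - 1)) = By / Bt ∧
    ((τ - 1) / (τ + 1)) ^ 2 = u₂ / Bt ^ 2 := by
  have hByu' : By - u ≠ 0 := sub_ne_zero.mpr hByu
  have hBtu'' : Bt - u ≠ 0 := sub_ne_zero.mpr hBtu
  have hBtu2 : Bt + u ≠ 0 := fun h => hBtu' (eq_neg_of_add_eq_zero_left h)
  have hAyu' : Ay - u ≠ 0 := sub_ne_zero.mpr hAyu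
  have hAtu' : At - u ≠ 0 := sub_ne_zero.mpr hAtu
  have hu0 : u ≠ 0 := by
    intro h0
    apply hden
    have : η - 1 = 0 := by
      rw [hη, h0]
      field_simp
      ring
    rw [this, mul_zero]
  have hη1 : η - 1 = 2 * u / (By - u) := by rw [hη]; field_simp; ring
  have hη2 : η + 1 = 2 * By / (By - u) := by rw [hη]; field_simp; ring
  have hτ1 : τ - 1 = 2 * u / (Bt - u) := by rw [hτ]; field_simp; ring
  have hτ2 : τ + 1 = 2 * Bt / (Bt - u) := by rw [hτ]; field_simp; ring
  refine ⟨?_, ?_, ?_, ?_⟩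
  · rw [hη]
    rw [div_pow, div_eq_div_iff (pow_ne_zero _ hByu') hAyu']
    subst hBy
    linear_combination (-2*u) * hv + (-2*u) * hu
  · rw [hτ]
    rw [div_pow, div_eq_div_iff (pow_ne_zero _ hBtu'') hAtu']
    subst hBt
    linear_combination (-2*u) * hw + (-2*u) * hu
  · rw [hη1, hη2, hτ1, hτ2]
    field_simp
  · rw [hτ1, hτ2]
    have h : 2 * u / (Bt - u) / (2 * Bt / (Bt - u)) = u / Bt := by
      field_simp
    rw [h, div_pow, hu]
end

section
/- Let K be a field of characteristic 0 and s, v, w, w₁ ∈ K with v ≠ 0, w = v·w₁, v² = (9s-1)(s-1), w₁² = s² - 18s + 1, and suppose s ≠ 1, 3s+1 ≠ 0, and w ≠ 0. Define y = 1/2 - (16s(5s-1) + vw)/(2(s-1)(3s+1)v) and t = 1/2 - P/(2(s-1)v²w), where P = 27s⁵ - 315s⁴ - 370s³ + 170s² - 25s + 1. Then negating both v and w (i.e. replacing (v,w₁) by (-v,w₁)) sends (y,t) to (1-y, 1-t). -/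
theorem half_sub_div_neg {K : Type*} [DivisionRing K] [NeZero (2 : K)] (a b : K) :
    1 / 2 - a / -b = 1 - (1 / 2 - a / b) := by
  rw [div_neg, sub_neg_eq_add, ← sub_add, sub_half]

theorem twenty_branch_involution_general {K : Type*} [Field K] [CharZero K]
    (s v w : K)
    (P y t : K)
    (hy : y = 1 / 2 - (16 * s * (5 * s - 1) + v * w) / (2 * (s - 1) * (3 * s + 1) * v))
    (ht : t = 1 / 2 - P / (2 * (s - 1) * v ^ 2 * w)) :
    1 / 2 - (16 * s * (5 * s - 1) + (-v) * (-w)) / (2 * (s - 1) * (3 * s + 1) * (-v)) = 1 - y ∧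
    1 / 2 - P / (2 * (s - 1) * (-v) ^ 2 * (-w)) = 1 - t := by
  subst hy ht
  constructor
  · rw [neg_mul_neg, mul_neg, half_sub_div_neg]
  · rw [neg_sq, mul_neg, half_sub_div_neg]

theorem twenty_branch_involution {K : Type*} [Field K] [CharZero K]
    (s v w w₁ : K) (hv0 : v ≠ 0) (hw : w = v * w₁)
    (hv : v ^ 2 = (9 * s - 1) * (s - 1)) (hw₁ : w₁ ^ 2 = s ^ 2 - 18 * s + 1)
    (hs1 : s ≠ 1) (hs3 : 3 * s + 1 ≠ 0) (hw0 : w ≠ 0)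
    (P y t : K)
    (hP : P = 27 * s ^ 5 - 315 * s ^ 4 - 370 * s ^ 3 + 170 * s ^ 2 - 25 * s + 1)
    (hy : y = 1 / 2 - (16 * s * (5 * s - 1) + v * w) / (2 * (s - 1) * (3 * s + 1) * v))
    (ht : t = 1 / 2 - P / (2 * (s - 1) * v ^ 2 * w)) :
    1 / 2 - (16 * s * (5 * s - 1) + (-v) * (-w)) / (2 * (s - 1) * (3 * s + 1) * (-v)) = 1 - y ∧
    1 / 2 - P / (2 * (s - 1) * (-v) ^ 2 * (-w)) = 1 - t :=
  twenty_branch_involution_general s v w P y t hy ht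
end

section
/- Let j ∈ ℂ with 2j ≠ 7, and let v, w ∈ ℂ satisfy v² = -(j+1)(j²-2j+6)(4j²-13j+19) and w² = (j-1)(2j-7)(j+1)(2j²+j+17)(4j²-13j+19), with v ≠ 0, j ≠ 1, j² - 2j + 6 ≠ 0. Define p = w/(3(j-1)v) and q = v/(3(j²-2j+6)). Then 9(p⁶q²+p²q⁶) + 18p⁴q⁴ + 4(p⁶+q⁶) + 26(p⁴q²+p²q⁴) + 8(p⁴+q⁴) + 57p²q² + 20(p²+q²) + 16 = 0. -/
set_option maxHeartbeats 1000000 in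
theorem genus_seven_space_to_octic (j v w : ℂ) (hj : 2 * j ≠ 7)
    (hv : v ^ 2 = -(j + 1) * (j ^ 2 - 2 * j + 6) * (4 * j ^ 2 - 13 * j + 19))
    (hw : w ^ 2 = (j - 1) * (2 * j - 7) * (j + 1) * (2 * j ^ 2 + j + 17) *
      (4 * j ^ 2 - 13 * j + 19))
    (hv0 : v ≠ 0) (hj1 : j ≠ 1) (hj2 : j ^ 2 - 2 * j + 6 ≠ 0)
    (p q : ℂ)
    (hp : p = w / (3 * (j - 1) * v))
    (hq : q = v / (3 * (j ^ 2 - 2 * j + 6))) :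
    9 * (p ^ 6 * q ^ 2 + p ^ 2 * q ^ 6) + 18 * p ^ 4 * q ^ 4 + 4 * (p ^ 6 + q ^ 6) +
      26 * (p ^ 4 * q ^ 2 + p ^ 2 * q ^ 4) + 8 * (p ^ 4 + q ^ 4) + 57 * p ^ 2 * q ^ 2 +
      20 * (p ^ 2 + q ^ 2) + 16 = 0 := by
  have h3 : (3:ℂ) ≠ 0 := by norm_num
  have hj1' : (j:ℂ) - 1 ≠ 0 := sub_ne_zero.mpr hj1
  have hprod : -(j + 1) * (j ^ 2 - 2 * j + 6) * (4 * j ^ 2 - 13 * j + 19) ≠ 0 := by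
    rw [← hv]; exact pow_ne_zero 2 hv0
  have hjp1 : j + 1 ≠ 0 := by
    intro h; apply hprod; rw [h]; ring
  have h4j : 4 * j ^ 2 - 13 * j + 19 ≠ 0 := by
    intro h; apply hprod; rw [h]; ring
  have hpw : 3 * (j - 1) * v * p = w := by
    rw [hp]; field_simp
  have hqw : 3 * (j ^ 2 - 2 * j + 6) * q = v := by
    rw [hq]; field_simp
    exact div_self (by rw [show j * (j - 2) + 6 = j ^ 2 - 2 * j + 6 by ring]; exact hj2)
  have hA : (j + 1) * (4 * j ^ 2 - 13 * j + 19) * (j - 1) ≠ 0 :=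
    mul_ne_zero (mul_ne_zero hjp1 h4j) hj1'
  have hp2 : 9 * (j - 1) * (j ^ 2 - 2 * j + 6) * p ^ 2 =
      -((2 * j - 7) * (2 * j ^ 2 + j + 17)) := by
    apply mul_left_cancel₀ hA
    linear_combination (-(3 * (j - 1) * v * p + w)) * hpw - hw +
      9 * (j - 1) ^ 2 * p ^ 2 * hv
  have hq2 : 9 * (j ^ 2 - 2 * j + 6) * q ^ 2 =
      -((j + 1) * (4 * j ^ 2 - 13 * j + 19)) := by
    apply mul_left_cancel₀ hj2
    linear_combination (3 * (j ^ 2 - 2 * j + 6) * q + v) * hqw + hv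
  have hD : (9 * (j - 1) * (j ^ 2 - 2 * j + 6)) ^ 3 *
      (9 * (j ^ 2 - 2 * j + 6)) ^ 3 ≠ 0 := by
    apply mul_ne_zero <;> apply pow_ne_zero <;>
      [exact mul_ne_zero (mul_ne_zero (by norm_num) hj1') hj2;
       exact mul_ne_zero (by norm_num) hj2]
  apply mul_left_cancel₀ hD
  rw [mul_zero]
  linear_combination
    ((531441)*p^4*q^2*j^12 + (-6377292)*p^4*q^2*j^11 + (48361131)*p^4*q^2*j^10 + (-249777270)*p^4*q^2*j^9 + (993794670)*p^4*q^2*j^8 + (-3078106272)*p^4*q^2*j^7 + (7665504984)*p^4*q^2*j^6 + (-15194961072)*p^4*q^2*j^5 + (23978617920)*p^4*q^2*j^4 + (-29080451520)*p^4*q^2*j^3 + (25942823856)*p^4*q^2*j^2 + (-15152445792)*p^4*q^2*j^1 + (4132485216)*p^4*q^2 + (236196)*p^4*j^12 + (-2834352)*p^4*j^11 + (21493836)*p^4*j^10 + (-111012120)*p^4*j^9 + (441686520)*p^4*j^8 + (-1368047232)*p^4*j^7 + (3406891104)*p^4*j^6 + (-6753316032)*p^4*j^5 + (10657163520)*p^4*j^4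 + (-12924645120)*p^4*j^3 + (11530143936)*p^4*j^2 + (-6734420352)*p^4*j^1 + (1836660096)*p^4 + (1062882)*p^2*q^4*j^12 + (-12754584)*p^2*q^4*j^11 + (96722262)*p^2*q^4*j^10 + (-499554540)*p^2*q^4*j^9 + (1987589340)*p^2*q^4*j^8 + (-6156212544)*p^2*q^4*j^7 + (15331009968)*p^2*q^4*j^6 + (-30389922144)*p^2*q^4*j^5 + (47957235840)*p^2*q^4*j^4 + (-58160903040)*p^2*q^4*j^3 + (51885647712)*p^2*q^4*j^2 + (-30304891584)*p^2*q^4*j^1 + (8264970432)*p^2*q^4 + (1299078)*p^2*q^2*j^12 + (-15588936)*p^2*q^2*j^11 + (118511343)*p^2*q^2*j^10 + (-607614210)*p^2*q^2*j^9 + (2395322685)*p^2*q^2*j^8 + (-7276253976)*p^2*q^2*j^7 + (17686828872)*p^2*q^2*j^6 + (-33704224416)*p^2*q^2*j^5 + (50595545160)*p^2*q^2*j^4 + (-56488635360)*p^2*q^2*j^3 + (44921644848)*p^2*q^2*j^2 + (-20458352736)*p^2*q^2*j^1 + (2831517648)*p^2*q^2 + (367416)*p^2*j^12 + (-4408992)*p^2*j^11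 + (33566076)*p^2*j^10 + (-171373320)*p^2*j^9 + (671977620)*p^2*j^8 + (-2017848672)*p^2*j^7 + (4832465184)*p^2*j^6 + (-8976707712)*p^2*j^5 + (13013874720)*p^2*j^4 + (-13617486720)*p^2*j^3 + (9716158656)*p^2*j^2 + (-3106449792)*p^2*j^1 + (-374134464)*p^2 + (531441)*q^6*j^12 + (-6377292)*q^6*j^11 + (48361131)*q^6*j^10 + (-249777270)*q^6*j^9 + (993794670)*q^6*j^8 + (-3078106272)*q^6*j^7 + (7665504984)*q^6*j^6 + (-15194961072)*q^6*j^5 + (23978617920)*q^6*j^4 + (-29080451520)*q^6*j^3 + (25942823856)*q^6*j^2 + (-15152445792)*q^6*j^1 + (4132485216)*q^6 + (1062882)*q^4*j^12 + (-12754584)*q^4*j^11 + (97312752)*q^4*j^10 + (-493649640)*q^4*j^9 + (1919682990)*q^4*j^8 + (-5660200944)*q^4*j^7 + (13228865568)*q^4*j^6 + (-23511894624)*q^4*j^5 + (31919527440)*q^4*j^4 + (-28967077440)*q^4*j^3 + (14897354112)*q^4*j^2 + (2857026816)*q^4*j^1 + (-6275255328)*q^4 + (2788425)*q^2*j^12 +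 (-33461100)*q^2*j^11 + (254337165)*q^2*j^10 + (-1304654850)*q^2*j^9 + (5146612425)*q^2*j^8 + (-15649297200)*q^2*j^7 + (38144833875)*q^2*j^6 + (-73030031730)*q^2*j^5 + (111083306850)*q^2*j^4 + (-127039330800)*q^2*j^3 + (108478917900)*q^2*j^2 + (-57785351400)*q^2*j^1 + (19932580440)*q^2 + (1017684)*j^12 + (-12212208)*j^11 + (92755044)*j^10 + (-476853480)*j^9 + (1886374980)*j^8 + (-5769620928)*j^7 + (14171908716)*j^6 + (-27479969928)*j^5 + (42538987080)*j^4 + (-50101778880)*j^3 + (44700775344)*j^2 + (-25914165408)*j^1 + (10007781984)) * hp2 +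
    ((295245)*q^4*j^11 + (2657205)*q^4*j^10 + (-36905625)*q^4*j^9 + (281958975)*q^4*j^8 + (-1299078000)*q^4*j^7 + (4490085960)*q^4*j^6 + (-11457867960)*q^4*j^5 + (22615767000)*q^4*j^4 + (-33091059600)*q^4*j^3 + (35075106000)*q^4*j^2 + (-23851072080)*q^4*j^1 + (7270112880)*q^4 + (-131220)*q^2*j^12 + (-820125)*q^2*j^11 + (20306295)*q^2*j^10 + (-163696950)*q^2*j^9 + (851617800)*q^2*j^8 + (-3010744485)*q^2*j^7 + (8036404875)*q^2*j^6 + (-14924569140)*q^2*j^5 + (19571134950)*q^2*j^4 + (-10597983300)*q^2*j^3 + (-8419206420)*q^2*j^2 + (28697814000)*q^2*j^1 + (-20060126280)*q^2 + (1108080)*j^12 + (-14128020)*j^11 + (117266940)*j^10 + (-648664200)*j^9 + (2798485200)*j^8 + (-9271961460)*j^7 + (25016699340)*j^6 + (-53153372880)*j^5 + (92060890200)*j^4 + (-121415533200)*j^3 + (126260408880)*j^2 + (-85326592320)*j^1 + (41800393440)) * hq2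
end
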